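/- arXiv:math/0507150 — 3 statements merged into one kernel-verified Lean document; each statement's English description precedes it below -/
import Mathlib

section
/- For positive integers m, n with gcd(mn, q) = 1 and a ∈ {0,1}, the sum of χ(m)·conj(χ)(n) over primitive characters χ mod q with χ(-1) = (-1)^a equals (1/2)·∑_{k | gcd(q, |m-n|)} φ(k)μ(q/k) + ((-1)^a/2)·∑_{k | gcd(q, m+n)} φ(k)μ(q/k). -/
/-!
Every character mod `q` is induced by a unique primitive character, whose level `d ∣ q` is its
conductor, so summing `χ z · conj χ w` over all characters mod `e` and sorting by conductor gives
`∑_{d ∣ e} P(d) = φ(e) · [e ∣ z - w]`, where `P(d)` is the same sum over primitive characters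
mod `d`. Möbius inversion yields `P(q) = ∑_{k ∣ (q, z - w)} φ(k) μ(q/k)`. Finally the parity
condition is cut out by the factor `(1 + (-1)^a χ(-1)) / 2`, and `χ(-1) χ(m) = χ(-m)`, so the
sum splits into `P(q)` at `(z, w) = (m, n)` and at `(-m, n)`.
-/

namespace DirichletCharacter

open Finset ArithmeticFunction
open scoped Classical ArithmeticFunction.Moebius

theorem sum_eq_sum_divisors_sum_isPrimitive {R M : Type*} [CommRing R] [IsDomain R]
    [AddCommMonoid M] {q : ℕ} [NeZero q] (F : ∀ d : ℕ, DirichletCharacter R d → M)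
    (hF : ∀ (d : ℕ) (hd : d ∣ q) (ψ : DirichletCharacter R d),
      F q (changeLevel hd ψ) = F d ψ) :
    ∑ χ : DirichletCharacter R q, F q χ =
      ∑ d ∈ q.divisors, ∑ ψ : DirichletCharacter R d,
        if ψ.IsPrimitive then F d ψ else 0 := by
  rw [← sum_fiberwise_of_maps_to (g := conductor)
    fun χ _ ↦ Nat.mem_divisors.mpr ⟨conductor_dvd_level χ, NeZero.ne q⟩]
  refine sum_congr rfl fun d hd ↦ ?_
  have hdq : d ∣ q := Nat.dvd_of_mem_divisors hd
  rw [← sum_filter]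
  refine (sum_bij (fun ψ _ ↦ changeLevel hdq ψ) (fun ψ hψ ↦ ?_)
    (fun _ _ _ _ h ↦ changeLevel_injective hdq h) (fun χ hχ ↦ ?_)
    (fun ψ _ ↦ (hF d hdq ψ).symm)).symm
  · simp only [mem_filter, mem_univ, true_and] at hψ ⊢
    rwa [conductor_changeLevel]
  · simp only [mem_filter, mem_univ, true_and] at hχ
    have h : χ.FactorsThrough d := hχ ▸ factorsThrough_conductor χ
    refine ⟨h.χ₀, ?_, h.eq_changeLevel.symm⟩
    simp only [mem_filter, mem_univ, true_and, isPrimitive_def]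
    rw [← conductor_changeLevel _ hdq, ← h.eq_changeLevel, hχ]

theorem sum_char_mul_conj_char_eq {e : ℕ} [NeZero e] {w : ZMod e} (hw : IsUnit w)
    (z : ZMod e) :
    ∑ χ : DirichletCharacter ℂ e, χ z * starRingEnd ℂ (χ w) =
      if w = z then (e.totient : ℂ) else 0 := by
  have hconj (χ : DirichletCharacter ℂ e) : starRingEnd ℂ (χ w) = χ w⁻¹ := by
    obtain ⟨u, rfl⟩ := hw
    rw [← RCLike.star_def, MulChar.star_apply', MulChar.inv_apply, Ring.inverse_unit,
      ZMod.inv_coe_unit]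
  calc ∑ χ : DirichletCharacter ℂ e, χ z * starRingEnd ℂ (χ w)
      = ∑ χ : DirichletCharacter ℂ e, χ w⁻¹ * χ z :=
        sum_congr rfl fun χ _ ↦ by rw [hconj, mul_comm]
    _ = _ := sum_char_inv_mul_char_eq ℂ hw z

theorem sum_divisors_sum_isPrimitive_char_mul_conj_char {e : ℕ} [NeZero e] {z w : ℤ}
    (hz : IsCoprime z e) (hw : IsCoprime w e) :
    ∑ d ∈ e.divisors, ∑ ψ : DirichletCharacter ℂ d,
        (if ψ.IsPrimitive then ψ z * starRingEnd ℂ (ψ w) else 0) =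
      if (e : ℤ) ∣ z - w then (e.totient : ℂ) else 0 := by
  have hF (d : ℕ) (hd : d ∣ e) (ψ : DirichletCharacter ℂ d) :
      changeLevel hd ψ z * starRingEnd ℂ (changeLevel hd ψ w) = ψ z * starRingEnd ℂ (ψ w) := by
    rw [changeLevel_eq_cast_of_dvd' ψ hd hz, changeLevel_eq_cast_of_dvd' ψ hd hw]
  rw [← sum_eq_sum_divisors_sum_isPrimitive (fun d ψ ↦ ψ z * starRingEnd ℂ (ψ w)) hF,
    sum_char_mul_conj_char_eq ((ZMod.coe_int_isUnit_iff_isCoprime w e).mpr hw.symm)]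
  simp only [ZMod.intCast_eq_intCast_iff_dvd_sub]

theorem sum_isPrimitive_char_mul_conj_char_eq {q : ℕ} [NeZero q] {z w : ℤ}
    (hz : IsCoprime z q) (hw : IsCoprime w q) :
    ∑ χ : DirichletCharacter ℂ q, (if χ.IsPrimitive then χ z * starRingEnd ℂ (χ w) else 0) =
      ((∑ k ∈ (q.gcd (z - w).natAbs).divisors, (k.totient : ℤ) * μ (q / k) : ℤ) : ℂ) := by
  have hsum (e : ℕ) (he : 0 < e) (heq : e ∈ {e | e ∣ q}) :
      ∑ d ∈ e.divisors, ∑ ψ : DirichletCharacter ℂ d,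
          (if ψ.IsPrimitive then ψ z * starRingEnd ℂ (ψ w) else 0) =
        if (e : ℤ) ∣ z - w then (e.totient : ℂ) else 0 := by
    have : NeZero e := ⟨he.ne'⟩
    have hdvd : (e : ℤ) ∣ q := Int.natCast_dvd_natCast.mpr heq
    exact sum_divisors_sum_isPrimitive_char_mul_conj_char
      (hz.of_isCoprime_of_dvd_right hdvd) (hw.of_isCoprime_of_dvd_right hdvd)
  have hinv := (sum_eq_iff_sum_mul_moebius_eq_on _ (fun _ _ ↦ Nat.dvd_trans)).mp hsum q
    (NeZero.pos q) dvd_rfl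
  rw [← hinv, Nat.sum_divisorsAntidiagonal'
      (f := fun x y ↦ (μ x : ℂ) * if (y : ℤ) ∣ z - w then (y.totient : ℂ) else 0),
    ← Nat.divisors_filter_dvd_of_dvd (NeZero.ne q) (Nat.gcd_dvd_left q _), sum_filter]
  push_cast
  refine sum_congr rfl fun k hk ↦ ?_
  simp only [Nat.dvd_gcd_iff, Nat.dvd_of_mem_divisors hk, true_and, Int.natCast_dvd]
  split_ifs <;> ring

theorem ite_apply_neg_one_eq_neg_one_pow {R : Type*} [Field R] [NeZero (2 : R)] {q : ℕ}
    (χ : DirichletCharacter R q) (a : ℕ) (x : R) :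
    (if χ (-1) = (-1) ^ a then x else 0) = x / 2 + (-1) ^ a / 2 * (χ (-1) * x) := by
  have hne : (1 : R) ≠ -1 := fun h ↦ (two_ne_zero : (2 : R) ≠ 0) (by linear_combination h)
  rcases χ.even_or_odd with h | h <;> rcases Nat.even_or_odd a with ha | ha <;>
    rw [ha.neg_one_pow, h] <;> simp [hne, hne.symm] <;> field_simp <;> ring

end DirichletCharacter

open Finset in
open scoped Classical in
theorem sum_primitive_char_parity_general (q m n : ℕ) (hq : 0 < q)
    (hmn : Nat.gcd (m * n) q = 1) (a : ℕ) :
    (∑ χ : DirichletCharacter ℂ q,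
        if χ.IsPrimitive ∧ χ (-1) = (-1 : ℂ) ^ a then χ m * (starRingEnd ℂ) (χ n) else 0) =
      (1 / 2 : ℂ) * ((∑ k ∈ (Nat.gcd q ((m : ℤ) - n).natAbs).divisors,
          (Nat.totient k : ℤ) * ArithmeticFunction.moebius (q / k) : ℤ) : ℂ) +
        ((-1 : ℂ) ^ a / 2) * ((∑ k ∈ (Nat.gcd q (m + n)).divisors,
          (Nat.totient k : ℤ) * ArithmeticFunction.moebius (q / k) : ℤ) : ℂ) := by
  have : NeZero q := ⟨hq.ne'⟩
  have hmq : IsCoprime (m : ℤ) q :=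
    Nat.isCoprime_iff_coprime.mpr (Nat.Coprime.coprime_mul_right hmn)
  have hnq : IsCoprime (n : ℤ) q :=
    Nat.isCoprime_iff_coprime.mpr (Nat.Coprime.coprime_mul_left hmn)
  have hsplit (χ : DirichletCharacter ℂ q) :
      (if χ.IsPrimitive ∧ χ (-1) = (-1 : ℂ) ^ a then χ m * starRingEnd ℂ (χ n) else 0) =
        1 / 2 * (if χ.IsPrimitive then χ (m : ℤ) * starRingEnd ℂ (χ (n : ℤ)) else 0) +
          (-1) ^ a / 2 *
            (if χ.IsPrimitive then χ (-m : ℤ) * starRingEnd ℂ (χ (n : ℤ)) else 0) := by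
    have hneg : χ (-m : ℤ) = χ (-1) * χ m := by
      rw [Int.cast_neg, Int.cast_natCast, ← map_mul, neg_one_mul]
    by_cases hχ : χ.IsPrimitive
    · rw [ite_and, if_pos hχ, if_pos hχ, if_pos hχ,
        DirichletCharacter.ite_apply_neg_one_eq_neg_one_pow, hneg, Int.cast_natCast,
        Int.cast_natCast]
      ring
    · simp [hχ]
  have habs : ((-m : ℤ) - n).natAbs = m + n := by omega
  rw [sum_congr rfl fun χ _ ↦ hsplit χ, sum_add_distrib, ← mul_sum, ← mul_sum,
    DirichletCharacter.sum_isPrimitive_char_mul_conj_char_eq hmq hnq,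
    DirichletCharacter.sum_isPrimitive_char_mul_conj_char_eq hmq.neg_left hnq, habs]

open Finset in
open scoped Classical in
/-- Equation (2.1): orthogonality for primitive characters of fixed parity. -/
theorem sum_primitive_char_parity (q m n : ℕ) (hq : 0 < q) (hm : 0 < m) (hn : 0 < n)
    (hmn : Nat.gcd (m * n) q = 1) (a : ℕ) (ha : a = 0 ∨ a = 1) :
    (∑ χ : DirichletCharacter ℂ q,
        if χ.IsPrimitive ∧ χ (-1) = (-1 : ℂ) ^ a then χ m * (starRingEnd ℂ) (χ n) else 0) =
      (1 / 2 : ℂ) * ((∑ k ∈ (Nat.gcd q ((m : ℤ) - n).natAbs).divisors,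
          (Nat.totient k : ℤ) * ArithmeticFunction.moebius (q / k) : ℤ) : ℂ) +
        ((-1 : ℂ) ^ a / 2) * ((∑ k ∈ (Nat.gcd q (m + n)).divisors,
          (Nat.totient k : ℤ) * ArithmeticFunction.moebius (q / k) : ℤ) : ℂ) :=
  sum_primitive_char_parity_general q m n hq hmn a
end

section
/- For a positive integer q and a real number x ≥ 2, ∑_{n ≤ x, gcd(n,q)=1} 1/n = (φ(q)/q)·(log x + γ + ∑_{p | q} (log p)/(p-1)) + O(2^{ω(q)} (log x)/x), where γ is the Euler–Mascheroni constant. -/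
open Finset Real

/-!
Legendre's sieve over the prime factors of `q` writes the sum as
`∑_{t ⊆ primeFactors q} (-1)^|t| / d_t · H(x / d_t)` with `d_t = ∏_{p ∈ t} p` and
`H(y) = ∑_{n ≤ y} 1/n`. Since `H(y) = log y + γ + O(1/y)` uniformly for all `y > 0` (for `y < 1`
the sum is empty and `|log y + γ| ≤ 2/y`), each of the `2^ω(q)` terms equals its main term
`(-1)^|t| / d_t · (log x + γ - log d_t)` up to `O(1/x)`, with no need to separate `d_t ≤ x`.
Expanding `∏_{p ∣ q} (1 - 1/p)` one prime at a time shows that the main terms add up to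
`φ(q)/q · (log x + γ + ∑_{p ∣ q} log p / (p - 1))`.
-/

theorem abs_sum_Icc_floor_inv_sub_log_sub_eulerMascheroniConstant_le {y : ℝ} (hy : 0 < y) :
    |∑ n ∈ Icc 1 ⌊y⌋₊, (1 : ℝ) / n - log y - eulerMascheroniConstant| ≤ 2 / y := by
  rcases lt_or_ge y 1 with hy1 | hy1
  · have hlog : -log y ≤ y⁻¹ - 1 := by
      simpa [log_inv] using log_le_sub_one_of_pos (inv_pos.2 hy)
    have hinv : 1 < y⁻¹ := one_lt_inv_iff₀.2 ⟨hy, hy1⟩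
    have := log_nonpos hy.le hy1.le
    have := eulerMascheroniConstant_lt_two_thirds
    rw [Nat.floor_eq_zero.2 hy1, Icc_eq_empty_of_lt zero_lt_one, sum_empty, div_eq_mul_inv, abs_le]
    constructor <;> linarith [one_half_lt_eulerMascheroniConstant]
  · set N := ⌊y⌋₊
    have hN0 : N ≠ 0 := (Nat.floor_pos.2 hy1).ne'
    have hN : (1 : ℝ) ≤ N := by exact_mod_cast Nat.one_le_iff_ne_zero.2 hN0
    have hNy : (N : ℝ) ≤ y := Nat.floor_le hy.le
    have hyN : y < N + 1 := Nat.lt_floor_add_one y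
    have hH : ∑ n ∈ Icc 1 N, (1 : ℝ) / n = harmonic N := by
      simp [harmonic_eq_sum_Icc, one_div]
    have hlower := eulerMascheroniConstant_lt_eulerMascheroniSeq' N
    have hupper := eulerMascheroniSeq_lt_eulerMascheroniConstant N
    rw [eulerMascheroniSeq', if_neg hN0] at hlower
    rw [eulerMascheroniSeq] at hupper
    have hlog_succ : log (N + 1) - log y ≤ 2 / y := by
      rw [← log_div (by positivity) hy.ne']
      calc log ((N + 1) / y) ≤ (N + 1) / y - 1 := log_le_sub_one_of_pos (by positivity)
        _ ≤ 2 / y := by rw [div_sub_one hy.ne']; gcongr; linarith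
    have hlog_floor : -(2 / y) ≤ log N - log y := by
      rw [← log_div (by positivity) hy.ne']
      calc -(2 / y) ≤ -(1 / N) := by
            rw [neg_le_neg_iff, div_le_div_iff₀ (by positivity) hy]; linarith
        _ ≤ 1 - (N / y)⁻¹ := by
            rw [inv_div, one_sub_div (by positivity), neg_div']
            gcongr
            linarith
        _ ≤ log (N / y) := one_sub_inv_le_log_of_pos (by positivity)
    rw [hH, abs_le]
    constructor <;> linarith

theorem sum_Icc_filter_dvd_inv {D : ℕ} (hD : 0 < D) (N : ℕ) :
    ∑ n ∈ Icc 1 N with D ∣ n, (1 : ℝ) / n =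
      1 / D * ∑ m ∈ Icc 1 (N / D), (1 : ℝ) / m := by
  have himage : {n ∈ Icc 1 N | D ∣ n} = (Icc 1 (N / D)).image (D * ·) := by
    ext n
    simp only [mem_filter, mem_Icc, mem_image, Nat.le_div_iff_mul_le hD]
    constructor
    · rintro ⟨⟨hn1, hnN⟩, m, rfl⟩
      exact ⟨m, ⟨Nat.pos_of_mul_pos_left hn1, by linarith⟩, rfl⟩
    · rintro ⟨m, ⟨hm1, hmN⟩, rfl⟩
      exact ⟨⟨Nat.mul_pos hD hm1, by linarith⟩, dvd_mul_right D m⟩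
  rw [himage, sum_image fun _ _ _ _ h => Nat.eq_of_mul_eq_mul_left hD h, mul_sum]
  refine sum_congr rfl fun m _ => ?_
  push_cast
  rw [one_div_mul_one_div]

theorem abs_neg_one_pow_mul_sum_Icc_filter_dvd_inv_sub_le (k : ℕ) {D : ℕ} (hD : 0 < D) {x : ℝ}
    (hx : 0 < x) :
    |(-1) ^ k * ∑ n ∈ Icc 1 ⌊x⌋₊ with D ∣ n, (1 : ℝ) / n -
      (-1) ^ k / D * (log x + eulerMascheroniConstant - log D)| ≤ 2 / x := by
  have hD' : (0 : ℝ) < D := Nat.cast_pos.2 hD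
  have h := abs_sum_Icc_floor_inv_sub_log_sub_eulerMascheroniConstant_le (div_pos hx hD')
  rw [Nat.floor_div_natCast, log_div hx.ne' hD'.ne'] at h
  rw [sum_Icc_filter_dvd_inv hD]
  calc _ = |(-1 : ℝ) ^ k| * |1 / (D : ℝ)| * |∑ m ∈ Icc 1 (⌊x⌋₊ / D), (1 : ℝ) / m -
        (log x - log D) - eulerMascheroniConstant| := by
        rw [← abs_mul, ← abs_mul]; congr 1; ring
    _ ≤ 1 * (1 / D) * (2 / (x / D)) := by
        rw [abs_neg_one_pow, abs_of_pos (one_div_pos.2 hD')]; gcongr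
    _ = 2 / x := by field_simp

theorem Nat.gcd_eq_one_iff_forall_mem_primeFactors_not_dvd {n q : ℕ} (hq : q ≠ 0) :
    n.gcd q = 1 ↔ ∀ p ∈ q.primeFactors, ¬ p ∣ n := by
  refine ⟨fun h p hp hpn => ?_, fun h => Nat.coprime_of_dvd fun p hp hpn hpq =>
    h p (Nat.mem_primeFactors.2 ⟨hp, hpq, hq⟩) hpn⟩
  exact (Nat.prime_of_mem_primeFactors hp).not_dvd_one
    (h ▸ Nat.dvd_gcd hpn (Nat.dvd_of_mem_primeFactors hp))

theorem Nat.prod_dvd_iff_forall_dvd_of_subset_primeFactors {t : Finset ℕ} {n q : ℕ}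
    (ht : t ⊆ q.primeFactors) : ∏ p ∈ t, p ∣ n ↔ ∀ p ∈ t, p ∣ n :=
  ⟨fun h _ hp => (dvd_prod_of_mem _ hp).trans h, fun h =>
    prod_primes_dvd n (fun _ hp => (Nat.prime_of_mem_primeFactors (ht hp)).prime) h⟩

theorem boole_gcd_eq_one_eq_sum_powerset {R : Type*} [CommRing R] {q : ℕ} (hq : q ≠ 0)
    (n : ℕ) :
    (if n.gcd q = 1 then 1 else 0 : R) =
      ∑ t ∈ q.primeFactors.powerset, (-1) ^ #t * if ∏ p ∈ t, p ∣ n then 1 else 0 := by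
  calc (if n.gcd q = 1 then 1 else 0 : R)
      = ∏ p ∈ q.primeFactors, (1 - if p ∣ n then 1 else 0) := by
        simp only [Nat.gcd_eq_one_iff_forall_mem_primeFactors_not_dvd hq, ← prod_boole]
        exact prod_congr rfl fun p _ => by by_cases p ∣ n <;> simp [*]
    _ = _ := by
        rw [prod_sub]
        refine sum_congr rfl fun t ht => ?_
        simp only [prod_const_one, mul_one, prod_boole,
          Nat.prod_dvd_iff_forall_dvd_of_subset_primeFactors (mem_powerset.1 ht)]

theorem sum_filter_gcd_eq_one_eq_sum_powerset {R : Type*} [CommRing R] {q : ℕ} (hq : q ≠ 0)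
    (s : Finset ℕ) (f : ℕ → R) :
    ∑ n ∈ s with n.gcd q = 1, f n =
      ∑ t ∈ q.primeFactors.powerset,
        (-1) ^ #t * ∑ n ∈ s with ∏ p ∈ t, p ∣ n, f n := by
  have hterm (n : ℕ) : (if n.gcd q = 1 then f n else 0) =
      ∑ t ∈ q.primeFactors.powerset, (-1) ^ #t * if ∏ p ∈ t, p ∣ n then f n else 0 := by
    simp only [← mul_boole _ (f n), boole_gcd_eq_one_eq_sum_powerset hq, mul_sum, mul_left_comm]
  simp only [sum_filter, hterm, mul_sum]
  exact sum_comm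

theorem sum_powerset_neg_one_pow_div_prod_mul_sub_sum {ι K : Type*} [Field K] [DecidableEq ι]
    {s : Finset ι} {p : ι → K} (hp0 : ∀ i ∈ s, p i ≠ 0) (hp1 : ∀ i ∈ s, p i ≠ 1)
    (b : ι → K) (c : K) :
    ∑ t ∈ s.powerset, (-1) ^ #t / (∏ i ∈ t, p i) * (c - ∑ i ∈ t, b i) =
      (∏ i ∈ s, (1 - (p i)⁻¹)) * (c + ∑ i ∈ s, b i / (p i - 1)) := by
  induction s using Finset.induction_on generalizing c with
  | empty => simp
  | @insert j s hj ih =>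
    have hp0' := fun i hi => hp0 i (mem_insert_of_mem hi)
    have hp1' := fun i hi => hp1 i (mem_insert_of_mem hi)
    have hj0 := hp0 j (mem_insert_self j s)
    have hj1 : p j - 1 ≠ 0 := sub_ne_zero.2 (hp1 j (mem_insert_self j s))
    have hinsert : ∀ t ∈ s.powerset, (-1) ^ #(insert j t) / (∏ i ∈ insert j t, p i) *
        (c - ∑ i ∈ insert j t, b i) =
          -(p j)⁻¹ * ((-1) ^ #t / (∏ i ∈ t, p i) * (c - b j - ∑ i ∈ t, b i)) := by
      intro t ht
      have hjt : j ∉ t := fun h => hj (mem_powerset.1 ht h)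
      rw [card_insert_of_notMem hjt, prod_insert hjt, sum_insert hjt, pow_succ]
      field_simp
      ring
    rw [sum_powerset_insert hj, sum_congr rfl hinsert, ← mul_sum, ih hp0' hp1', ih hp0' hp1',
      prod_insert hj, sum_insert hj]
    field_simp
    ring

theorem totient_div_eq_prod_one_sub_inv {q : ℕ} (hq : q ≠ 0) :
    (q.totient : ℝ) / q = ∏ p ∈ q.primeFactors, (1 - (p : ℝ)⁻¹) := by
  rw [div_eq_iff (Nat.cast_ne_zero.2 hq)]
  have h := congrArg (Rat.cast : ℚ → ℝ) (Nat.totient_eq_mul_prod_factors q)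
  push_cast at h
  rw [h, mul_comm]

open Finset Real in
/-- Lemma 4 (first part): `∑_{n ≤ x, (n,q)=1} 1/n
  = (φ(q)/q)(log x + γ + ∑_{p|q} log p/(p-1)) + O(2^{ω(q)} log x / x)`. -/
theorem sum_inv_coprime :
    ∃ C : ℝ, ∀ q : ℕ, 0 < q → ∀ x : ℝ, 2 ≤ x →
      |(∑ n ∈ (Finset.Icc 1 ⌊x⌋₊).filter (fun n => Nat.gcd n q = 1), (1 : ℝ) / n) -
        ((Nat.totient q : ℝ) / q) *
          (Real.log x + Real.eulerMascheroniConstant +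
            ∑ p ∈ q.primeFactors, Real.log p / (p - 1))| ≤
        C * 2 ^ q.primeFactors.card * Real.log x / x := by
  refine ⟨4, fun q hq x hx => ?_⟩
  have hx0 : 0 < x := by linarith
  set P := q.primeFactors
  set L := log x + eulerMascheroniConstant
  have hP : ∀ p ∈ P, 0 < p := fun p hp => Nat.pos_of_mem_primeFactors hp
  have hterm : ∀ t ∈ P.powerset,
      |(-1) ^ #t * ∑ n ∈ Icc 1 ⌊x⌋₊ with ∏ p ∈ t, p ∣ n, (1 : ℝ) / n -
        (-1) ^ #t / (∏ p ∈ t, (p : ℝ)) * (L - ∑ p ∈ t, log p)| ≤ 2 / x := by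
    intro t ht
    have htP : ∀ p ∈ t, 0 < p := fun p hp => hP p (mem_powerset.1 ht hp)
    rw [← log_prod fun p hp => (Nat.cast_pos.2 (htP p hp)).ne', ← Nat.cast_prod]
    exact abs_neg_one_pow_mul_sum_Icc_filter_dvd_inv_sub_le #t (prod_pos htP) hx0
  have hmain := sum_powerset_neg_one_pow_div_prod_mul_sub_sum (s := P)
    (fun p hp => (Nat.cast_pos.2 (hP p hp)).ne')
    (fun p hp => by exact_mod_cast (Nat.prime_of_mem_primeFactors hp).one_lt.ne') (fun p => log p) L
  rw [sum_filter_gcd_eq_one_eq_sum_powerset hq.ne', totient_div_eq_prod_one_sub_inv hq.ne',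
    ← hmain, ← sum_sub_distrib]
  calc _ ≤ ∑ _t ∈ P.powerset, 2 / x := (abs_sum_le_sum_abs _ _).trans (sum_le_sum hterm)
    _ = 2 ^ #P * 2 / x := by rw [sum_const, card_powerset, nsmul_eq_mul]; push_cast; ring
    _ ≤ 4 * 2 ^ #P * log x / x := by
        have : 1 / 2 < log x := by linarith [log_two_gt_d9, log_le_log two_pos hx]
        gcongr ?_ / x
        nlinarith [show (0 : ℝ) < 2 ^ #P by positivity]
end

section
/- Let k be a positive integer, Z₁, Z₂ ≥ 2, and ε > 0. If Z₁Z₂ ≤ k^{19/10}, then the number of quadruples (a,b,c,d) of positive integers with Z₁ ≤ ab < 2Z₁, Z₂ ≤ cd < 2Z₂, gcd(abcd, k) = 1, ac ≡ ±bd (mod k), and ac ≠ bd is O_ε((Z₁Z₂)^{1+ε}/k). -/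
/-!
Put `s = ac`, `t = bd` and `N = ⌊4 Z₁ Z₂⌋`. Then `st = (ab)(cd) ≤ N`, `s ≠ t` and `s ≡ ±t (mod k)`,
and the quadruple is recovered from `(s, t)` and the divisors `a ∣ s`, `b ∣ t`; by the divisor
bound `τ(n) ≪_δ n ^ δ` each pair carries `≪ N ^ (2δ)` quadruples. A pair with `s < t` is determined,
up to four choices, by `u = s` and `m = (t - s) / k` or `m = (s + t) / k`, where
`umk ≤ s (s + t) ≤ 2st`; so there are at most `4 #{(u, m) : um ≤ 2N/k} ≪ N ^ (1 + δ) / k` pairs.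
-/

open Finset Real

variable {δ : ℝ}

lemma add_one_le_rpow_of_two_le_rpow (e : ℕ) {p : ℝ} (hp₀ : 0 ≤ p) (hp : 2 ≤ p ^ δ) :
    (e + 1 : ℝ) ≤ p ^ (δ * e) :=
  calc (e + 1 : ℝ) ≤ 2 ^ e := by exact_mod_cast Nat.lt_two_pow_self
    _ ≤ (p ^ δ) ^ e := pow_le_pow_left₀ zero_le_two hp e
    _ = p ^ (δ * e) := (rpow_mul_natCast hp₀ δ e).symm

lemma add_one_le_mul_rpow (hδ : 0 < δ) (e : ℕ) {p : ℝ} (hp : 2 ≤ p) :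
    (e + 1 : ℝ) ≤ max 1 (δ * log 2)⁻¹ * p ^ (δ * e) := by
  have hc : 0 < δ * log 2 := mul_pos hδ (log_pos one_lt_two)
  have hA₁ : 1 ≤ max 1 (δ * log 2)⁻¹ := le_max_left _ _
  have hA₂ : 1 ≤ max 1 (δ * log 2)⁻¹ * (δ * log 2) :=
    (inv_mul_cancel₀ hc.ne').symm.le.trans (mul_le_mul_of_nonneg_right (le_max_right _ _) hc.le)
  have hexp : 1 + δ * log 2 * e ≤ p ^ (δ * e) :=
    calc 1 + δ * log 2 * e ≤ exp (δ * e * log 2) := by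
          nlinarith [add_one_le_exp (δ * e * log 2)]
      _ = 2 ^ (δ * e) := by rw [rpow_def_of_pos two_pos, mul_comm (log 2)]
      _ ≤ p ^ (δ * e) := rpow_le_rpow zero_le_two hp (by positivity)
  have he : (0 : ℝ) ≤ e := e.cast_nonneg
  nlinarith

lemma rpow_eq_prod_primeFactors {n : ℕ} (hn : n ≠ 0) (δ : ℝ) :
    (n : ℝ) ^ δ = ∏ p ∈ n.primeFactors, (p : ℝ) ^ (δ * n.factorization p) := by
  conv_lhs => rw [Nat.prod_primeFactors_pow_factorization hn]
  push_cast
  rw [← finsetProd_rpow _ _ fun p _ => by positivity]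
  refine prod_congr rfl fun p _ => ?_
  rw [← rpow_natCast, ← rpow_mul p.cast_nonneg, mul_comm]

/-- In `τ(n) / n ^ δ = ∏ (e_p + 1) / p ^ (δ e_p)` the factors with `p ^ δ ≥ 2` are at most `1`;
only the finitely many primes `p ≤ 2 ^ (1 / δ)` contribute a bounded factor `> 1`. -/
theorem exists_card_divisors_le_mul_rpow (hδ : 0 < δ) :
    ∃ C : ℝ, 0 < C ∧ ∀ n : ℕ, n ≠ 0 → (#n.divisors : ℝ) ≤ C * (n : ℝ) ^ δ := by
  set A := max 1 (δ * log 2)⁻¹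
  set P₀ := ⌈(2 : ℝ) ^ δ⁻¹⌉₊
  have hA : 1 ≤ A := le_max_left _ _
  refine ⟨A ^ (P₀ + 1), by positivity, fun n hn => ?_⟩
  have hfactor : ∀ p ∈ n.primeFactors, (n.factorization p + 1 : ℝ) ≤
      (if p ≤ P₀ then A else 1) * (p : ℝ) ^ (δ * n.factorization p) := by
    intro p hp
    have hp2 : (2 : ℝ) ≤ p := by exact_mod_cast (Nat.prime_of_mem_primeFactors hp).two_le
    split_ifs with hpP
    · exact add_one_le_mul_rpow hδ _ hp2
    · rw [one_mul]
      refine add_one_le_rpow_of_two_le_rpow _ p.cast_nonneg ?_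
      calc (2 : ℝ) = ((2 : ℝ) ^ δ⁻¹) ^ δ := by
            rw [← rpow_mul zero_le_two, inv_mul_cancel₀ hδ.ne', rpow_one]
        _ ≤ (p : ℝ) ^ δ := by
            gcongr
            exact (Nat.le_ceil _).trans (by exact_mod_cast (not_le.mp hpP).le)
  have hsmall : ∏ p ∈ n.primeFactors, (if p ≤ P₀ then A else 1) ≤ A ^ (P₀ + 1) := by
    rw [prod_ite, prod_const_one, mul_one, prod_const]
    refine pow_le_pow_right₀ hA ?_
    calc #(n.primeFactors.filter (· ≤ P₀)) ≤ #(range (P₀ + 1)) :=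
          card_le_card fun p hp => by simp only [mem_filter, mem_range] at hp ⊢; omega
      _ = P₀ + 1 := card_range _
  calc (#n.divisors : ℝ) = ∏ p ∈ n.primeFactors, (n.factorization p + 1 : ℝ) := by
        rw [Nat.card_divisors hn]; push_cast; rfl
    _ ≤ ∏ p ∈ n.primeFactors, (if p ≤ P₀ then A else 1) * (p : ℝ) ^ (δ * n.factorization p) :=
        prod_le_prod (fun _ _ => by positivity) hfactor
    _ = (∏ p ∈ n.primeFactors, (if p ≤ P₀ then A else 1)) * (n : ℝ) ^ δ := by
        rw [prod_mul_distrib, rpow_eq_prod_primeFactors hn]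
    _ ≤ A ^ (P₀ + 1) * (n : ℝ) ^ δ := by gcongr

lemma Int.natCast_modEq_neg_iff {a b n : ℕ} : (a : ℤ) ≡ -(b : ℤ) [ZMOD n] ↔ n ∣ a + b := by
  rw [Int.modEq_iff_dvd, ← Int.natCast_dvd_natCast,
    show -(b : ℤ) - a = -((a + b : ℕ) : ℤ) by push_cast; ring, dvd_neg]

lemma Nat.card_divisorsAntidiagonal (n : ℕ) : #n.divisorsAntidiagonal = #n.divisors := by
  rw [← Nat.map_div_right_divisors, card_map]

lemma card_biUnion_divisorsAntidiagonal_le {C : ℝ} (hδ : 0 ≤ δ)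
    (hC : ∀ n : ℕ, n ≠ 0 → (#n.divisors : ℝ) ≤ C * (n : ℝ) ^ δ) (M : ℕ) :
    (#((Icc 1 M).biUnion Nat.divisorsAntidiagonal) : ℝ) ≤ C * (M : ℝ) ^ δ * M := by
  have hC₁ : 1 ≤ C := by simpa using hC 1 one_ne_zero
  calc (#((Icc 1 M).biUnion Nat.divisorsAntidiagonal) : ℝ)
      ≤ ∑ n ∈ Icc 1 M, (#n.divisors : ℝ) := by
        simp_rw [← Nat.card_divisorsAntidiagonal]; exact_mod_cast card_biUnion_le
    _ ≤ ∑ _n ∈ Icc 1 M, C * (M : ℝ) ^ δ := sum_le_sum fun n hn => by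
        obtain ⟨hn₁, hnM⟩ := mem_Icc.mp hn
        calc (#n.divisors : ℝ) ≤ C * (n : ℝ) ^ δ := hC n (by omega)
          _ ≤ C * (M : ℝ) ^ δ := by gcongr
    _ = C * (M : ℝ) ^ δ * M := by simp [mul_comm]

def quadruplesOver (q : ℕ × ℕ) : Finset (ℕ × ℕ × ℕ × ℕ) :=
  (q.1.divisorsAntidiagonal ×ˢ q.2.divisorsAntidiagonal).image
    fun x => (x.1.1, x.2.1, x.1.2, x.2.2)

lemma mem_quadruplesOver {a b c d : ℕ} (hac : a * c ≠ 0) (hbd : b * d ≠ 0) :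
    (a, b, c, d) ∈ quadruplesOver (a * c, b * d) :=
  mem_image.mpr ⟨((a, c), (b, d)), by simp [hac, hbd], rfl⟩

lemma card_quadruplesOver_le (q : ℕ × ℕ) :
    #(quadruplesOver q) ≤ #q.1.divisors * #q.2.divisors := by
  rw [← Nat.card_divisorsAntidiagonal, ← Nat.card_divisorsAntidiagonal, ← card_product]
  exact card_image_le

def plusMinusPairs (k N : ℕ) : Finset (ℕ × ℕ) :=
  (Icc 1 N ×ˢ Icc 1 N).filter
    fun q => q.1 * q.2 ≤ N ∧ q.1 ≠ q.2 ∧ (q.1 ≡ q.2 [MOD k] ∨ k ∣ q.1 + q.2)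

/-- Every pair `(s, t)` with `min s t = u` and `|s - t| = m k` or `s + t = m k` lies in
`plusMinusPairsOver k (u, m)`. -/
def plusMinusPairsOver (k : ℕ) (x : ℕ × ℕ) : Finset (ℕ × ℕ) :=
  {(x.1, x.1 + x.2 * k), (x.1 + x.2 * k, x.1), (x.1, x.2 * k - x.1), (x.2 * k - x.1, x.1)}

lemma exists_plusMinusPairsOver_of_lt {k s t : ℕ} (hs : 0 < s) (hst : s < t)
    (hcong : s ≡ t [MOD k] ∨ k ∣ s + t) :
    ∃ x : ℕ × ℕ, x.1 * x.2 ≠ 0 ∧ x.1 * x.2 * k ≤ 2 * (s * t) ∧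
      (s, t) ∈ plusMinusPairsOver k x ∧ (t, s) ∈ plusMinusPairsOver k x := by
  rcases hcong with hcong | hcong
  · obtain ⟨m, hm⟩ := (Nat.modEq_iff_dvd' hst.le).mp hcong
    have hm₀ : m ≠ 0 := by rintro rfl; omega
    have ht : t = s + m * k := by rw [mul_comm]; omega
    refine ⟨(s, m), by positivity, ?_, by simp [plusMinusPairsOver, ht],
      by simp [plusMinusPairsOver, ht]⟩
    calc s * m * k = s * (t - s) := by rw [hm]; ring
      _ ≤ 2 * (s * t) := by have := Nat.sub_le t s; nlinarith
  · obtain ⟨m, hm⟩ := hcong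
    have hm₀ : m ≠ 0 := by rintro rfl; omega
    have ht : t = m * k - s := by rw [mul_comm]; omega
    refine ⟨(s, m), by positivity, ?_, by simp [plusMinusPairsOver, ht],
      by simp [plusMinusPairsOver, ht]⟩
    calc s * m * k = s * (s + t) := by rw [hm]; ring
      _ ≤ 2 * (s * t) := by nlinarith

lemma plusMinusPairs_subset_biUnion {k N : ℕ} (hk : 0 < k) :
    plusMinusPairs k N ⊆
      ((Icc 1 (2 * N / k)).biUnion Nat.divisorsAntidiagonal).biUnion (plusMinusPairsOver k) := by
  rintro ⟨s, t⟩ hq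
  simp only [plusMinusPairs, mem_filter, mem_product, mem_Icc] at hq
  obtain ⟨⟨⟨hs, -⟩, ht, -⟩, hN, hne, hcong⟩ := hq
  obtain ⟨x, hx₀, hxk, hx⟩ : ∃ x : ℕ × ℕ, x.1 * x.2 ≠ 0 ∧ x.1 * x.2 * k ≤ 2 * (s * t) ∧
      (s, t) ∈ plusMinusPairsOver k x := by
    rcases lt_or_gt_of_ne hne with hlt | hlt
    · obtain ⟨x, hx₀, hxk, hx, -⟩ := exists_plusMinusPairsOver_of_lt hs hlt hcong
      exact ⟨x, hx₀, hxk, hx⟩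
    · obtain ⟨x, hx₀, hxk, -, hx⟩ := exists_plusMinusPairsOver_of_lt ht hlt
        (hcong.imp Nat.ModEq.symm (add_comm s t ▸ ·))
      exact ⟨x, hx₀, by rwa [mul_comm s], hx⟩
  refine mem_biUnion.mpr ⟨x, mem_biUnion.mpr ⟨x.1 * x.2, ?_, by simp [hx₀]⟩, hx⟩
  exact mem_Icc.mpr ⟨Nat.one_le_iff_ne_zero.mpr hx₀, (Nat.le_div_iff_mul_le hk).mpr (by omega)⟩

lemma card_plusMinusPairs_le {k : ℕ} (hk : 0 < k) (N : ℕ) :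
    #(plusMinusPairs k N) ≤ #((Icc 1 (2 * N / k)).biUnion Nat.divisorsAntidiagonal) * 4 :=
  (card_le_card (plusMinusPairs_subset_biUnion hk)).trans
    (card_biUnion_le_card_mul _ _ _ fun _ _ => card_le_four)

lemma mem_biUnion_quadruplesOver {k a b c d : ℕ} {Y : ℝ} (ha : 0 < a) (hb : 0 < b) (hc : 0 < c)
    (hd : 0 < d) (hY : (a * b : ℝ) * (c * d) ≤ Y)
    (hcong : (a * c : ℤ) ≡ (b * d : ℤ) [ZMOD k] ∨ (a * c : ℤ) ≡ -(b * d : ℤ) [ZMOD k])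
    (hne : a * c ≠ b * d) :
    (a, b, c, d) ∈ (plusMinusPairs k ⌊Y⌋₊).biUnion quadruplesOver := by
  have hst : a * c * (b * d) ≤ ⌊Y⌋₊ := Nat.le_floor (by push_cast; linarith)
  have hs : 0 < a * c := by positivity
  have ht : 0 < b * d := by positivity
  have hcong' : a * c ≡ b * d [MOD k] ∨ k ∣ a * c + b * d := by
    rw [← Int.natCast_modEq_iff, ← Int.natCast_modEq_neg_iff]
    push_cast
    exact hcong
  refine mem_biUnion.mpr ⟨(a * c, b * d), ?_, mem_quadruplesOver hs.ne' ht.ne'⟩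
  simp only [plusMinusPairs, mem_filter, mem_product, mem_Icc]
  exact ⟨⟨⟨hs, le_trans (Nat.le_mul_of_pos_right _ ht) hst⟩,
    ht, le_trans (Nat.le_mul_of_pos_left _ hs) hst⟩, hst, hne, hcong'⟩

theorem exists_card_biUnion_quadruplesOver_le (hδ : 0 < δ) :
    ∃ C : ℝ, 0 ≤ C ∧ ∀ k N : ℕ, 0 < k →
      (#((plusMinusPairs k N).biUnion quadruplesOver) : ℝ) ≤ C * (N : ℝ) ^ (1 + δ) / k := by
  obtain ⟨C, hC₀, hC⟩ := exists_card_divisors_le_mul_rpow (div_pos hδ three_pos)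
  refine ⟨4 * C ^ 3 * 2 ^ (1 + δ), by positivity, fun k N hk => ?_⟩
  set D := C * (2 * N : ℝ) ^ (δ / 3) with hD
  have hdiv : ∀ n : ℕ, n ≠ 0 → n ≤ 2 * N → (#n.divisors : ℝ) ≤ D := fun n hn hnN =>
    (hC n hn).trans (by rw [hD]; gcongr; exact_mod_cast hnN)
  have hpairs : (#(plusMinusPairs k N) : ℝ) ≤ 4 * D * (2 * N / k) := by
    set M := 2 * N / k
    have hM : (M : ℝ) ≤ 2 * N / k := by exact_mod_cast Nat.cast_div_le
    have hMN : M ≤ 2 * N := Nat.div_le_self _ _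
    calc (#(plusMinusPairs k N) : ℝ) ≤ #((Icc 1 M).biUnion Nat.divisorsAntidiagonal) * 4 := by
          exact_mod_cast card_plusMinusPairs_le hk N
      _ ≤ C * (M : ℝ) ^ (δ / 3) * M * 4 := by
          gcongr; exact card_biUnion_divisorsAntidiagonal_le (by positivity) hC M
      _ = 4 * (C * (M : ℝ) ^ (δ / 3)) * M := by ring
      _ ≤ 4 * D * (2 * N / k) := by
          have hCM : C * (M : ℝ) ^ (δ / 3) ≤ D := by rw [hD]; gcongr; exact_mod_cast hMN
          gcongr
  have hfiber : ∀ q ∈ plusMinusPairs k N, (#(quadruplesOver q) : ℝ) ≤ D ^ 2 := by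
    intro q hq
    simp only [plusMinusPairs, mem_filter, mem_product, mem_Icc] at hq
    calc (#(quadruplesOver q) : ℝ) ≤ #q.1.divisors * #q.2.divisors := by
          exact_mod_cast card_quadruplesOver_le q
      _ ≤ D * D := by gcongr <;> apply hdiv <;> omega
      _ = D ^ 2 := (sq D).symm
  calc (#((plusMinusPairs k N).biUnion quadruplesOver) : ℝ)
      ≤ ∑ q ∈ plusMinusPairs k N, (#(quadruplesOver q) : ℝ) := by exact_mod_cast card_biUnion_le
    _ ≤ #(plusMinusPairs k N) * D ^ 2 := by simpa using sum_le_card_nsmul _ _ _ hfiber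
    _ ≤ 4 * D * (2 * N / k) * D ^ 2 := by gcongr
    _ = 4 * C ^ 3 * ((2 * N : ℝ) ^ (δ / 3)) ^ 3 * (2 * N) / k := by ring
    _ = 4 * C ^ 3 * 2 ^ (1 + δ) * (N : ℝ) ^ (1 + δ) / k := by
        rw [← rpow_mul_natCast (by positivity), mul_assoc _ _ (2 * (N : ℝ)),
          ← rpow_add_one' (by positivity) (by positivity), mul_rpow zero_le_two N.cast_nonneg]
        ring_nf

/-- Lemma 3 (second part): if `Z₁ Z₂ ≤ k^{19/10}` then the number of such quadruples
is `≪_ε (Z₁Z₂)^{1+ε}/k`. -/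
theorem count_quadruples_small :
    ∀ ε : ℝ, 0 < ε → ∃ C : ℝ, ∀ k : ℕ, 0 < k → ∀ Z₁ Z₂ : ℝ, 2 ≤ Z₁ → 2 ≤ Z₂ →
      Z₁ * Z₂ ≤ (k : ℝ) ^ ((19 : ℝ) / 10) →
      ({p : ℕ × ℕ × ℕ × ℕ |
          0 < p.1 ∧ 0 < p.2.1 ∧ 0 < p.2.2.1 ∧ 0 < p.2.2.2 ∧
          Z₁ ≤ (p.1 * p.2.1 : ℝ) ∧ (p.1 * p.2.1 : ℝ) < 2 * Z₁ ∧
          Z₂ ≤ (p.2.2.1 * p.2.2.2 : ℝ) ∧ (p.2.2.1 * p.2.2.2 : ℝ) < 2 * Z₂ ∧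
          Nat.gcd (p.1 * p.2.1 * p.2.2.1 * p.2.2.2) k = 1 ∧
          ((p.1 * p.2.2.1 : ℤ) ≡ (p.2.1 * p.2.2.2 : ℤ) [ZMOD k] ∨
            (p.1 * p.2.2.1 : ℤ) ≡ -(p.2.1 * p.2.2.2 : ℤ) [ZMOD k]) ∧
          p.1 * p.2.2.1 ≠ p.2.1 * p.2.2.2}.ncard : ℝ) ≤
        C * (Z₁ * Z₂) ^ (1 + ε) / k := by
  intro ε hε
  obtain ⟨C, hC₀, hC⟩ := exists_card_biUnion_quadruplesOver_le hε
  refine ⟨C * 4 ^ (1 + ε), fun k hk Z₁ Z₂ hZ₁ hZ₂ _ => ?_⟩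
  set N := ⌊4 * (Z₁ * Z₂)⌋₊
  have hN : (N : ℝ) ≤ 4 * (Z₁ * Z₂) := Nat.floor_le (by positivity)
  calc _ ≤ (#((plusMinusPairs k N).biUnion quadruplesOver) : ℝ) := by
        refine Nat.cast_le.mpr ((Set.ncard_le_ncard ?_ (finite_toSet _)).trans_eq
          (Set.ncard_coe_finset _))
        rintro ⟨a, b, c, d⟩ ⟨ha, hb, hc, hd, -, hab, -, hcd, -, hcong, hne⟩
        exact mem_biUnion_quadruplesOver ha hb hc hd
          (by nlinarith [mul_pos (Nat.cast_pos.mpr ha) (Nat.cast_pos.mpr hb) (α := ℝ)]) hcong hne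
    _ ≤ C * (N : ℝ) ^ (1 + ε) / k := hC k N hk
    _ ≤ C * (4 * (Z₁ * Z₂)) ^ (1 + ε) / k := by gcongr
    _ = C * 4 ^ (1 + ε) * (Z₁ * Z₂) ^ (1 + ε) / k := by
        rw [mul_rpow zero_le_four (by positivity), mul_assoc]
end
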